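/- arXiv:2602.14722 — 3 statements merged into one kernel-verified Lean document; each statement's English description precedes it below -/
import Mathlib

section
/- Fix a natural number k, a type α, and pairwise disjoint, finite, nonempty sub-alphabets σ₁, …, σ_k ⊆ α. If C is an arc set on {1, …, k} that is a well-nested matching, then the block-counting language L(C) over (σ₁, …, σ_k) is context-free. -/
namespace CFX
open ContextFreeGrammar

variable {T : Type}

lemma derives_of_terminals {g : ContextFreeGrammar T} {u v : List (Symbol T g.NT)}
    (h : g.Derives u v) (hu : ∀ x ∈ u, ∃ t, x = Symbol.terminal t) : v = u := by
  rcases h.eq_or_head with rfl | ⟨w, ⟨r, _, hr⟩, _⟩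
  · rfl
  · exfalso
    obtain ⟨p, q, hpq, -⟩ := hr.exists_parts
    have : Symbol.nonterminal r.input ∈ u := by
      rw [hpq]; simp
    obtain ⟨t, ht⟩ := hu _ this
    cases ht

lemma derives_head_cases {g : ContextFreeGrammar T} {n : g.NT} {w : List (Symbol T g.NT)}
    (h : g.Derives [Symbol.nonterminal n] w) :
    w = [Symbol.nonterminal n] ∨ ∃ r ∈ g.rules, r.input = n ∧ g.Derives r.output w := by
  rcases h.eq_or_head with rfl | ⟨v, ⟨r, hrmem, hr⟩, hvw⟩
  · exact Or.inl rfl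
  · right
    obtain ⟨p, q, hpq, hv⟩ := hr.exists_parts
    have hp : p = [] := by
      cases p with
      | nil => rfl
      | cons a l =>
        exfalso
        have := congrArg List.length hpq
        simp at this
    subst hp
    simp at hpq
    obtain ⟨hn, rfl⟩ := hpq
    simp at hv
    subst hv
    exact ⟨r, hrmem, hn.symm, hvw⟩

lemma derives_split_aux {g : ContextFreeGrammar T} {s w : List (Symbol T g.NT)}
    (h : g.Derives s w) :
    ∀ u v, s = u ++ v → ∃ w₁ w₂, w = w₁ ++ w₂ ∧ g.Derives u w₁ ∧ g.Derives v w₂ := by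
  induction h using Relation.ReflTransGen.head_induction_on with
  | refl =>
    rintro u v rfl
    exact ⟨u, v, rfl, by rfl, by rfl⟩
  | head hprod htail ih =>
    rintro u v rfl
    obtain ⟨r, hrmem, hr⟩ := hprod
    obtain ⟨p, q, hpq, rfl⟩ := hr.exists_parts
    rw [List.append_assoc] at hpq
    rcases List.append_eq_append_iff.mp hpq with ⟨a', ha1, ha2⟩ | ⟨c', hc1, hc2⟩
    · -- p = u ++ a',  v = a' ++ ([nt] ++ q)
      subst ha1
      obtain ⟨w₁, w₂, rfl, hu1, hv2⟩ := ih u (a' ++ r.output ++ q) (by simp)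
      refine ⟨w₁, w₂, rfl, hu1, ?_⟩
      have hpv : g.Produces v (a' ++ r.output ++ q) := by
        rw [ha2, ← List.append_assoc]
        exact ⟨r, hrmem, r.rewrites_of_exists_parts a' q⟩
      exact hpv.trans_derives hv2
    · -- u = p ++ c',  [nt] ++ q = c' ++ v
      cases c' with
      | nil =>
        simp at hc1 hc2
        subst hc1
        obtain ⟨w₁, w₂, rfl, hu1, hv2⟩ := ih u (r.output ++ q) (by simp)
        refine ⟨w₁, w₂, rfl, hu1, ?_⟩
        have hpv : g.Produces v (r.output ++ q) := by
          rw [← hc2]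
          have := r.rewrites_of_exists_parts [] q
          simpa using ⟨r, hrmem, by simpa using this⟩
        exact hpv.trans_derives hv2
      | cons x c'' =>
        simp at hc2
        obtain ⟨hx, hq⟩ := hc2
        subst hq hc1
        obtain ⟨w₁, w₂, rfl, hu1, hv2⟩ := ih (p ++ r.output ++ c'') v (by simp)
        refine ⟨w₁, w₂, rfl, ?_, hv2⟩
        have hpu : g.Produces (p ++ x :: c'') (p ++ r.output ++ c'') := by
          rw [← hx]
          exact ⟨r, hrmem, by simpa using r.rewrites_of_exists_parts p c''⟩
        exact hpu.trans_derives hu1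

lemma derives_append_split {g : ContextFreeGrammar T} {u v w : List (Symbol T g.NT)}
    (h : g.Derives (u ++ v) w) :
    ∃ w₁ w₂, w = w₁ ++ w₂ ∧ g.Derives u w₁ ∧ g.Derives v w₂ :=
  derives_split_aux h u v rfl


def liftSymbol {N N' : Type} (f : N → N') : Symbol T N → Symbol T N'
  | .terminal t => .terminal t
  | .nonterminal n => .nonterminal (f n)

def liftRule {N N' : Type} (f : N → N') (r : ContextFreeRule T N) : ContextFreeRule T N' :=
  ⟨f r.input, r.output.map (liftSymbol f)⟩

@[simp] lemma liftSymbol_terminal {N N' : Type} (f : N → N') (t : T) :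
    liftSymbol f (Symbol.terminal t) = Symbol.terminal t := rfl

@[simp] lemma liftSymbol_nonterminal {N N' : Type} (f : N → N') (n : N) :
    liftSymbol (T := T) f (Symbol.nonterminal n) = Symbol.nonterminal (f n) := rfl

lemma liftSymbol_map_terminal {N N' : Type} (f : N → N') (w : List T) :
    (w.map Symbol.terminal).map (liftSymbol (T := T) f) = w.map Symbol.terminal := by
  simp [List.map_map]

lemma unlift_map_terminal {N N' : Type} {f : N → N'} {u : List (Symbol T N)} {w : List T}
    (h : u.map (liftSymbol f) = w.map Symbol.terminal) : u = w.map Symbol.terminal := by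
  induction u generalizing w with
  | nil => cases w with
    | nil => rfl
    | cons c w' => simp at h
  | cons x u' ih =>
    cases w with
    | nil => simp at h
    | cons c w' =>
      simp at h
      obtain ⟨h1, h2⟩ := h
      cases x with
      | terminal t => simp at h1; simp [h1, ih h2]
      | nonterminal n => simp [liftSymbol] at h1

/-- `g` embeds in `g'` via the injection `f` on nonterminals. -/
structure Embeds (g g' : ContextFreeGrammar T) (f : g.NT → g'.NT) : Prop where
  inj : Function.Injective f
  mem : ∀ r ∈ g.rules, liftRule f r ∈ g'.rules
  unlift : ∀ r' ∈ g'.rules, ∀ n : g.NT, r'.input = f n → ∃ r ∈ g.rules, liftRule f r = r'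

lemma lift_rewrites {N N' : Type} (f : N → N') {r : ContextFreeRule T N}
    {u v : List (Symbol T N)} (h : r.Rewrites u v) :
    (liftRule f r).Rewrites (u.map (liftSymbol f)) (v.map (liftSymbol f)) := by
  induction h with
  | head s => simpa [liftRule] using ContextFreeRule.Rewrites.head (s.map (liftSymbol f))
  | cons x _ ih => exact ContextFreeRule.Rewrites.cons _ ih

lemma Embeds.derives {g g' : ContextFreeGrammar T} {f : g.NT → g'.NT} (he : Embeds g g' f)
    {u v : List (Symbol T g.NT)} (h : g.Derives u v) :
    g'.Derives (u.map (liftSymbol f)) (v.map (liftSymbol f)) := by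
  induction h with
  | refl => rfl
  | tail _ last ih =>
    obtain ⟨r, hrmem, hr⟩ := last
    exact ih.trans_produces ⟨liftRule f r, he.mem r hrmem, lift_rewrites f hr⟩

lemma Embeds.unlift_derives {g g' : ContextFreeGrammar T} {f : g.NT → g'.NT} (he : Embeds g g' f)
    {u : List (Symbol T g.NT)} {v : List (Symbol T g'.NT)}
    (h : g'.Derives (u.map (liftSymbol f)) v) :
    ∃ v₀, v = v₀.map (liftSymbol f) ∧ g.Derives u v₀ := by
  induction h with
  | refl => exact ⟨u, rfl, by rfl⟩
  | tail _ last ih =>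
    obtain ⟨v', hv', huv'⟩ := ih
    subst hv'
    obtain ⟨r', hrmem', hr'⟩ := last
    obtain ⟨p, q, hpq, rfl⟩ := hr'.exists_parts
    rw [List.append_assoc] at hpq
    obtain ⟨p₀, m₀, rfl, hp₀, hm₀⟩ := List.map_eq_append_iff.mp hpq
    obtain ⟨m₁, q₀, rfl, hm₁, hq₀⟩ := List.map_eq_append_iff.mp hm₀
    cases m₁ with
    | nil => simp at hm₁
    | cons x m₂ =>
      rw [List.map_cons] at hm₁
      have hm₂ : m₂ = [] := by
        have := congrArg List.length hm₁
        simpa using this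
      subst hm₂
      simp at hm₁
      cases x with
      | terminal t => simp [liftSymbol] at hm₁
      | nonterminal n =>
        simp at hm₁
        obtain ⟨r, hrmem, hlift⟩ := he.unlift r' hrmem' n hm₁.symm
        have hrin : r.input = n := by
          apply he.inj
          have : (liftRule f r).input = r'.input := by rw [hlift]
          simpa [liftRule, hm₁] using this
        refine ⟨p₀ ++ r.output ++ q₀, ?_, ?_⟩
        · have hout : (r.output.map (liftSymbol f)) = r'.output := by
            have : (liftRule f r).output = r'.output := by rw [hlift]
            simpa [liftRule] using this
          simp [hp₀, hq₀, hout]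
        · refine huv'.trans_produces ⟨r, hrmem, ?_⟩
          have := r.rewrites_of_exists_parts p₀ q₀
          rw [hrin] at this
          simpa using this


def allWordsLang (s : Set T) : Language T := {w | ∀ x ∈ w, x ∈ s}

lemma isContextFree_allWords {s : Set T} (hs : s.Finite) : (allWordsLang s).IsContextFree := by
  classical
  refine ⟨⟨Unit, (), insert ⟨(), []⟩
    (hs.toFinset.image fun c => ⟨(), [Symbol.terminal c, Symbol.nonterminal ()]⟩)⟩, ?_⟩
  set g : ContextFreeGrammar T := ⟨Unit, (), insert ⟨(), []⟩
    (hs.toFinset.image fun c => ⟨(), [Symbol.terminal c, Symbol.nonterminal ()]⟩)⟩ with hg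
  have hgood : ∀ u v : List (Symbol T Unit), g.Derives u v →
      (∀ x ∈ u, x = Symbol.nonterminal () ∨ ∃ c ∈ s, x = Symbol.terminal c) →
      (∀ x ∈ v, x = Symbol.nonterminal () ∨ ∃ c ∈ s, x = Symbol.terminal c) := by
    intro u v h hu
    induction h with
    | refl => exact hu
    | tail _ last ih =>
      obtain ⟨r, hrmem, hr⟩ := last
      obtain ⟨p, q, hpq, rfl⟩ := hr.exists_parts
      intro x hx
      simp at hx
      rcases hx with hx | hx | hx
      · exact ih x (by rw [hpq]; simp [hx])
      · -- x ∈ r.output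
        simp [g] at hrmem
        rcases hrmem with rfl | ⟨c, hc, rfl⟩
        · simp at hx
        · simp at hx
          rcases hx with rfl | rfl
          · exact Or.inr ⟨c, hc, rfl⟩
          · exact Or.inl rfl
      · exact ih x (by rw [hpq]; simp [hx])
  ext w
  simp only [ContextFreeGrammar.mem_language_iff]
  constructor
  · intro h
    intro x hx
    have := hgood _ _ h (by intro y hy; simp at hy; exact Or.inl hy)
    have hx' := this (Symbol.terminal x) (List.mem_map_of_mem (f := Symbol.terminal) hx)
    rcases hx' with h' | ⟨c, hc, h'⟩
    · cases h'
    · cases h'; exact hc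
  · intro hw
    induction w with
    | nil =>
      refine ContextFreeGrammar.Produces.single ⟨⟨(), []⟩, by simp [g], ?_⟩
      simpa using ContextFreeRule.Rewrites.input_output (r := (⟨(), []⟩ : ContextFreeRule T Unit))
    | cons c w' ih =>
      have h1 : g.Produces [Symbol.nonterminal ()]
          [Symbol.terminal c, Symbol.nonterminal ()] := by
        refine ⟨⟨(), [Symbol.terminal c, Symbol.nonterminal ()]⟩, ?_, ?_⟩
        · exact Finset.mem_insert_of_mem (Finset.mem_image.mpr
            ⟨c, hs.mem_toFinset.mpr (hw c (by simp)), rfl⟩)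
        · simpa using ContextFreeRule.Rewrites.input_output
            (r := (⟨(), [Symbol.terminal c, Symbol.nonterminal ()]⟩ : ContextFreeRule T Unit))
      have h2 : g.Derives [Symbol.nonterminal ()] (List.map Symbol.terminal w') :=
        ih (fun x hx => hw x (by simp [hx]))
      have h3 := h2.append_left [Symbol.terminal c]
      simpa using h1.trans_derives h3

lemma isContextFree_one : (1 : Language T).IsContextFree := by
  have h := isContextFree_allWords (s := (∅ : Set T)) Set.finite_empty
  have : allWordsLang (∅ : Set T) = 1 := by
    ext w
    simp [allWordsLang, Language.mem_one, List.eq_nil_iff_forall_not_mem]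
    rfl
  rwa [this] at h


lemma map_terminal_eq_append {w : List T} {N : Type} {x y : List (Symbol T N)}
    (h : List.map Symbol.terminal w = x ++ y) :
    ∃ w₁ w₂, w = w₁ ++ w₂ ∧ x = List.map Symbol.terminal w₁ ∧ y = List.map Symbol.terminal w₂ := by
  obtain ⟨w₁, w₂, rfl, h1, h2⟩ := List.map_eq_append_iff.mp h
  exact ⟨w₁, w₂, rfl, h1.symm, h2.symm⟩

lemma isContextFree_mul {L M : Language T} (hL : L.IsContextFree) (hM : M.IsContextFree) :
    (L * M).IsContextFree := by
  classical
  obtain ⟨g₁, rfl⟩ := hL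
  obtain ⟨g₂, rfl⟩ := hM
  let f₁ : g₁.NT → Option (g₁.NT ⊕ g₂.NT) := fun n => some (Sum.inl n)
  let f₂ : g₂.NT → Option (g₁.NT ⊕ g₂.NT) := fun n => some (Sum.inr n)
  let startRule : ContextFreeRule T (Option (g₁.NT ⊕ g₂.NT)) :=
    ⟨none, [Symbol.nonterminal (f₁ g₁.initial), Symbol.nonterminal (f₂ g₂.initial)]⟩
  let g : ContextFreeGrammar T := ⟨Option (g₁.NT ⊕ g₂.NT), none,
    insert startRule (g₁.rules.image (liftRule f₁) ∪ g₂.rules.image (liftRule f₂))⟩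
  have he₁ : Embeds g₁ g f₁ := by
    refine ⟨fun a b hab => Sum.inl_injective (Option.some_injective _ hab), ?_, ?_⟩
    · intro r hr
      exact Finset.mem_insert_of_mem (Finset.mem_union_left _ (Finset.mem_image_of_mem _ hr))
    · intro r' hr' n hn
      rcases Finset.mem_insert.mp hr' with rfl | hr'
      · simp [startRule, f₁] at hn
      · rcases Finset.mem_union.mp hr' with h | h
        · obtain ⟨r, hrmem, rfl⟩ := Finset.mem_image.mp h
          exact ⟨r, hrmem, rfl⟩
        · obtain ⟨r, hrmem, rfl⟩ := Finset.mem_image.mp h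
          simp [liftRule, f₁, f₂] at hn
          cases hn
  have he₂ : Embeds g₂ g f₂ := by
    refine ⟨fun a b hab => Sum.inr_injective (Option.some_injective _ hab), ?_, ?_⟩
    · intro r hr
      exact Finset.mem_insert_of_mem (Finset.mem_union_right _ (Finset.mem_image_of_mem _ hr))
    · intro r' hr' n hn
      rcases Finset.mem_insert.mp hr' with rfl | hr'
      · simp [startRule, f₂] at hn
      · rcases Finset.mem_union.mp hr' with h | h
        · obtain ⟨r, hrmem, rfl⟩ := Finset.mem_image.mp h
          simp [liftRule, f₁, f₂] at hn
          cases hn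
        · obtain ⟨r, hrmem, rfl⟩ := Finset.mem_image.mp h
          exact ⟨r, hrmem, rfl⟩
  refine ⟨g, ?_⟩
  ext w
  rw [ContextFreeGrammar.mem_language_iff, Language.mem_mul]
  constructor
  · intro h
    rcases derives_head_cases h with heq | ⟨r, hrmem, hrin, hder⟩
    · exfalso
      have : Symbol.nonterminal (none : Option (g₁.NT ⊕ g₂.NT)) ∈ List.map Symbol.terminal w := by
        rw [heq]; simp; rfl
      simp at this
    · have hrstart : r = startRule := by
        rcases Finset.mem_insert.mp hrmem with h' | h'
        · exact h'
        · exfalso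
          rcases Finset.mem_union.mp h' with h'' | h'' <;>
          · obtain ⟨r₀, _, rfl⟩ := Finset.mem_image.mp h''
            simp [liftRule, f₁, f₂] at hrin
      subst hrstart
      have hout : (startRule.output) =
          [Symbol.nonterminal (f₁ g₁.initial)] ++ [Symbol.nonterminal (f₂ g₂.initial)] := rfl
      rw [hout] at hder
      obtain ⟨x, y, hxy, hx, hy⟩ := derives_append_split hder
      obtain ⟨w₁, w₂, rfl, rfl, rfl⟩ := map_terminal_eq_append hxy
      have hx' : g.Derives (List.map (liftSymbol f₁) [Symbol.nonterminal g₁.initial])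
          (List.map Symbol.terminal w₁) := by simpa using hx
      obtain ⟨x₀, hx₀, hderx⟩ := he₁.unlift_derives hx'
      have hy' : g.Derives (List.map (liftSymbol f₂) [Symbol.nonterminal g₂.initial])
          (List.map Symbol.terminal w₂) := by simpa using hy
      obtain ⟨y₀, hy₀, hdery⟩ := he₂.unlift_derives hy'
      refine ⟨w₁, ?_, w₂, ?_, rfl⟩
      · rw [ContextFreeGrammar.mem_language_iff]
        rwa [unlift_map_terminal hx₀.symm] at hderx
      · rw [ContextFreeGrammar.mem_language_iff]
        rwa [unlift_map_terminal hy₀.symm] at hdery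
  · rintro ⟨w₁, hw₁, w₂, hw₂, rfl⟩
    have hstart : g.Produces [Symbol.nonterminal g.initial] startRule.output :=
      ⟨startRule, Finset.mem_insert_self _ _, ContextFreeRule.Rewrites.input_output⟩
    have hd₁ : g.Derives [Symbol.nonterminal (f₁ g₁.initial)] (List.map Symbol.terminal w₁) := by
      have := he₁.derives hw₁
      rwa [liftSymbol_map_terminal] at this
    have hd₂ : g.Derives [Symbol.nonterminal (f₂ g₂.initial)] (List.map Symbol.terminal w₂) := by
      have := he₂.derives hw₂
      rwa [liftSymbol_map_terminal] at this
    have h1 := hd₁.append_right [Symbol.nonterminal (f₂ g₂.initial)]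
    have h2 := hd₂.append_left (List.map Symbol.terminal w₁)
    have : g.Derives [Symbol.nonterminal (f₁ g₁.initial), Symbol.nonterminal (f₂ g₂.initial)]
        (List.map Symbol.terminal (w₁ ++ w₂)) := by
      simp only [List.map_append]
      have h1' : g.Derives
          [Symbol.nonterminal (f₁ g₁.initial), Symbol.nonterminal (f₂ g₂.initial)]
          (List.map Symbol.terminal w₁ ++ [Symbol.nonterminal (f₂ g₂.initial)]) := by
        simpa using h1
      exact h1'.trans h2
    exact hstart.trans_derives this


def wrapLang (s t : Set T) (M : Language T) : Language T :=
  {w | ∃ a x b : List T, w = a ++ x ++ b ∧ a.length = b.length ∧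
      (∀ c ∈ a, c ∈ s) ∧ (∀ d ∈ b, d ∈ t) ∧ x ∈ M}

lemma isContextFree_wrap {s t : Set T} (hs : s.Finite) (ht : t.Finite) {M : Language T}
    (hM : M.IsContextFree) : (wrapLang s t M).IsContextFree := by
  classical
  obtain ⟨g₀, rfl⟩ := hM
  let f : g₀.NT → Option g₀.NT := some
  let rule1 : ContextFreeRule T (Option g₀.NT) := ⟨none, [Symbol.nonterminal (some g₀.initial)]⟩
  let g : ContextFreeGrammar T := ⟨Option g₀.NT, none,
    insert rule1 (((hs.toFinset ×ˢ ht.toFinset).image fun cd =>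
        ⟨none, [Symbol.terminal cd.1, Symbol.nonterminal none, Symbol.terminal cd.2]⟩)
      ∪ g₀.rules.image (liftRule f))⟩
  have he : Embeds g₀ g f := by
    refine ⟨fun a b hab => Option.some_injective _ hab, ?_, ?_⟩
    · intro r hr
      exact Finset.mem_insert_of_mem (Finset.mem_union_right _ (Finset.mem_image_of_mem _ hr))
    · intro r' hr' n hn
      rcases Finset.mem_insert.mp hr' with rfl | hr'
      · simp [rule1, f] at hn
      · rcases Finset.mem_union.mp hr' with h | h
        · obtain ⟨cd, _, rfl⟩ := Finset.mem_image.mp h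
          simp [f] at hn
        · obtain ⟨r, hrmem, rfl⟩ := Finset.mem_image.mp h
          exact ⟨r, hrmem, rfl⟩
  refine ⟨g, ?_⟩
  ext w
  rw [ContextFreeGrammar.mem_language_iff]
  constructor
  · intro h
    have main : ∀ n : ℕ, ∀ w : List T, w.length = n →
        g.Derives [Symbol.nonterminal none] (List.map Symbol.terminal w) →
        w ∈ wrapLang s t g₀.language := by
      intro n
      induction n using Nat.strong_induction_on with
      | _ n ih =>
        intro w hlen hder
        rcases derives_head_cases hder with heq | ⟨r, hrmem, hrin, hd⟩
        · exfalso
          have : Symbol.nonterminal (none : Option g₀.NT) ∈ List.map Symbol.terminal w := by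
            rw [heq]; simp
          simp at this
        · rcases Finset.mem_insert.mp hrmem with rfl | hrmem'
          · -- rule1
            have hout : rule1.output = List.map (liftSymbol f) [Symbol.nonterminal g₀.initial] :=
              rfl
            rw [hout] at hd
            obtain ⟨x₀, hx₀, hderx⟩ := he.unlift_derives hd
            rw [unlift_map_terminal hx₀.symm] at hderx
            exact ⟨[], w, [], by simp, rfl, by simp, by simp, hderx⟩
          · rcases Finset.mem_union.mp hrmem' with hmem | hmem
            · obtain ⟨⟨c, d⟩, hcd, rfl⟩ := Finset.mem_image.mp hmem
              rw [Finset.mem_product] at hcd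
              have hc : c ∈ s := hs.mem_toFinset.mp hcd.1
              have hd' : d ∈ t := ht.mem_toFinset.mp hcd.2
              have hout : (⟨none, [Symbol.terminal c, Symbol.nonterminal none, Symbol.terminal d]⟩
                  : ContextFreeRule T (Option g₀.NT)).output =
                  ([Symbol.terminal c] ++ [Symbol.nonterminal none]) ++ [Symbol.terminal d] := rfl
              rw [hout] at hd
              obtain ⟨x₁, y₁, hxy₁, hx₁, hy₁⟩ := derives_append_split hd
              obtain ⟨x₂, y₂, rfl, hx₂, hy₂⟩ := derives_append_split hx₁
              have hx₂' : x₂ = [Symbol.terminal c] :=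
                derives_of_terminals hx₂
                  (by intro x hx; rw [List.mem_singleton] at hx; exact ⟨c, hx⟩)
              have hy₁' : y₁ = [Symbol.terminal d] :=
                derives_of_terminals hy₁
                  (by intro x hx; rw [List.mem_singleton] at hx; exact ⟨d, hx⟩)
              subst hx₂' hy₁'
              obtain ⟨w₁, w₂, rfl, hw₁, hw₂⟩ := map_terminal_eq_append hxy₁
              have hw₂' : w₂ = [d] := by
                cases w₂ with
                | nil => simp at hw₂
                | cons z l =>
                  rw [List.map_cons] at hw₂
                  injection hw₂ with h1 h2
                  injection h1 with h1
                  have hl : l = [] := (List.map_eq_nil_iff.mp h2.symm)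
                  rw [h1, hl]
              subst hw₂'
              obtain ⟨wb, hwbw, hwb⟩ : ∃ wb, w₁ = c :: wb ∧ y₂ = List.map Symbol.terminal wb := by
                cases w₁ with
                | nil => simp at hw₁
                | cons z l =>
                  rw [List.map_cons] at hw₁
                  have hw₁' := hw₁
                  rw [List.singleton_append] at hw₁'
                  injection hw₁' with h1 h2
                  injection h1 with h1
                  exact ⟨l, by rw [h1], h2⟩
              subst hwbw
              have hlt : wb.length < n := by
                rw [← hlen]; simp
              have hwb' : g.Derives [Symbol.nonterminal none] (List.map Symbol.terminal wb) := by
                rwa [hwb] at hy₂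
              obtain ⟨a', x', b', rfl, hlen', ha', hb', hx'⟩ :=
                ih wb.length hlt wb rfl hwb'
              refine ⟨c :: a', x', b' ++ [d], by simp, by simp [hlen'], ?_, ?_, hx'⟩
              · rintro e he'
                rcases List.mem_cons.mp he' with rfl | he''
                · exact hc
                · exact ha' e he''
              · intro e he'
                rcases List.mem_append.mp he' with he'' | he''
                · exact hb' e he''
                · simp at he''
                  subst he''
                  exact hd'
            · obtain ⟨r₀, _, rfl⟩ := Finset.mem_image.mp hmem
              simp [liftRule, f] at hrin
    exact main w.length w rfl h
  · rintro ⟨a, x, b, rfl, hlen, ha, hb, hx⟩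
    have claim : ∀ a b : List T, a.length = b.length → (∀ c ∈ a, c ∈ s) → (∀ d ∈ b, d ∈ t) →
        g.Derives [Symbol.nonterminal none]
          (List.map Symbol.terminal a ++ [Symbol.nonterminal none] ++ List.map Symbol.terminal b)
        := by
      intro a
      induction a with
      | nil =>
        intro b hb0 _ _
        have : b = [] := List.eq_nil_of_length_eq_zero hb0.symm
        subst this
        simp only [List.map_nil, List.nil_append, List.append_nil]
        rfl
      | cons c a' iha =>
        intro b hblen hca hdb
        rcases b.eq_nil_or_concat with rfl | ⟨b', d, rfl⟩
        · simp at hblen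
        · rw [List.concat_eq_append] at hblen hdb ⊢
          have hlen' : a'.length = b'.length := by simp at hblen; omega
          have ih' := iha b' hlen' (fun e he => hca e (by simp [he]))
            (fun e he => hdb e (by simp [he]))
          have hprod : g.Produces [Symbol.nonterminal none]
              ([Symbol.terminal c] ++ [Symbol.nonterminal none] ++ [Symbol.terminal d]) := by
            refine ⟨⟨none, [Symbol.terminal c, Symbol.nonterminal none, Symbol.terminal d]⟩,
              ?_, ?_⟩
            · refine Finset.mem_insert_of_mem (Finset.mem_union_left _
                (Finset.mem_image.mpr ⟨(c, d), ?_, rfl⟩))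
              rw [Finset.mem_product]
              exact ⟨hs.mem_toFinset.mpr (hca c (by simp)),
                ht.mem_toFinset.mpr (hdb d (by simp))⟩
            · simpa using ContextFreeRule.Rewrites.input_output
                (r := (⟨none, [Symbol.terminal c, Symbol.nonterminal none, Symbol.terminal d]⟩
                  : ContextFreeRule T (Option g₀.NT)))
          have hmid := (ih'.append_left [Symbol.terminal c]).append_right [Symbol.terminal d]
          refine hprod.trans_derives ?_
          have : g.Derives
              ([Symbol.terminal c] ++ [Symbol.nonterminal none] ++ [Symbol.terminal d])
              ([Symbol.terminal c] ++ (List.map Symbol.terminal a' ++ [Symbol.nonterminal none]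
                ++ List.map Symbol.terminal b') ++ [Symbol.terminal d]) := by
            simpa [List.append_assoc] using hmid
          have heq : [Symbol.terminal c] ++ (List.map Symbol.terminal a'
                ++ [Symbol.nonterminal (none : Option g₀.NT)] ++ List.map Symbol.terminal b')
                ++ [Symbol.terminal d]
              = List.map Symbol.terminal (c :: a') ++ [Symbol.nonterminal none]
                ++ List.map Symbol.terminal (b' ++ [d]) := by simp
          rwa [heq] at this
    have houter := claim a b hlen ha hb
    have hinner : g.Derives [Symbol.nonterminal none] (List.map Symbol.terminal x) := by
      have hprod : g.Produces [Symbol.nonterminal none] rule1.output :=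
        ⟨rule1, Finset.mem_insert_self _ _, ContextFreeRule.Rewrites.input_output⟩
      have hd := he.derives hx
      rw [liftSymbol_map_terminal] at hd
      exact hprod.trans_derives (by simpa [rule1] using hd)
    have := (hinner.append_left (List.map Symbol.terminal a)).append_right
      (List.map Symbol.terminal b)
    refine houter.trans ?_
    simpa [List.append_assoc] using this


/-! ### Interval block languages over ℕ-indexed alphabets -/

def blkIv {α : Type} (σ' : ℕ → Set α) (C' : Set (ℕ × ℕ)) (i j : ℕ) : Language α :=
  { w | ∃ B : ℕ → List α,
      w = ((List.range' i (j - i)).map B).flatten ∧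
      (∀ t, i ≤ t → t < j → ∀ x ∈ B t, x ∈ σ' t) ∧
      (∀ e ∈ C', i ≤ e.1 → e.2 < j → (B e.1).length = (B e.2).length) }

lemma range'_cons_of_lt {i j : ℕ} (h : i < j) :
    List.range' i (j - i) = i :: List.range' (i + 1) (j - (i + 1)) := by
  have h1 : j - i = (j - (i + 1)) + 1 := by omega
  rw [h1, List.range'_succ]

lemma range'_split4 {i m j : ℕ} (him : i < m) (hmj : m < j) :
    List.range' i (j - i) = [i] ++ List.range' (i + 1) (m - (i + 1)) ++ [m]
      ++ List.range' (m + 1) (j - (m + 1)) := by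
  have e1 : List.range' (i+1) (m - (i+1)) ++ List.range' (m) (j - m)
      = List.range' (i+1) (j - (i+1)) := by
    have := List.range'_append (s := i+1) (m := m - (i+1)) (n := j - m) (step := 1)
    rw [show i + 1 + 1 * (m - (i+1)) = m by omega] at this
    rw [show m - (i+1) + (j - m) = j - (i+1) by omega] at this
    exact this
  rw [range'_cons_of_lt (by omega : i < j), ← e1, range'_cons_of_lt (by omega : m < j)]
  simp

lemma blkIv_of_le {α : Type} (σ' : ℕ → Set α) (C' : Set (ℕ × ℕ)) {i j : ℕ} (h : j ≤ i) :
    blkIv σ' C' i j = 1 := by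
  ext w
  constructor
  · rintro ⟨B, rfl, -, -⟩
    have : j - i = 0 := by omega
    simp [this, Language.mem_one]
  · intro hw
    rw [Language.mem_one] at hw
    subst hw
    refine ⟨fun _ => [], ?_, ?_, ?_⟩
    · have : j - i = 0 := by omega
      simp [this]
    · intro t ht1 ht2; omega
    · intro e _ _ _; rfl

lemma blkIv_unmatched {α : Type} (σ' : ℕ → Set α) (C' : Set (ℕ × ℕ)) {i j : ℕ}
    (hij : i < j) (harc : ∀ e ∈ C', e.1 < e.2)
    (hno1 : ∀ e ∈ C', i ≤ e.1 → e.2 < j → e.1 ≠ i) :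
    blkIv σ' C' i j = allWordsLang (σ' i) * blkIv σ' C' (i + 1) j := by
  ext w
  rw [Language.mem_mul]
  constructor
  · rintro ⟨B, rfl, hmem, harcs⟩
    rw [range'_cons_of_lt hij]
    refine ⟨B i, hmem i le_rfl hij, ((List.range' (i+1) (j - (i+1))).map B).flatten,
      ⟨B, rfl, ?_, ?_⟩, by simp⟩
    · intro t ht1 ht2; exact hmem t (by omega) ht2
    · intro e he h1 h2; exact harcs e he (by omega) h2
  · rintro ⟨a, ha, y, ⟨B', hy, hmem, harcs⟩, rfl⟩
    refine ⟨fun t => if t = i then a else B' t, ?_, ?_, ?_⟩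
    · rw [range'_cons_of_lt hij]
      simp only [List.map_cons, List.flatten_cons, if_pos rfl]
      congr 1
      rw [hy]
      congr 1
      apply List.map_congr_left
      intro t ht
      rw [List.mem_range'_1] at ht
      rw [if_neg (by omega)]
    · intro t ht1 ht2 x hx
      simp only at hx
      by_cases h : t = i
      · rw [if_pos h] at hx; subst h; exact ha x hx
      · rw [if_neg h] at hx; exact hmem t (by omega) ht2 x hx
    · intro e he h1 h2
      have h1' : e.1 ≠ i := hno1 e he h1 h2
      have h2' : e.2 ≠ i := by have := harc e he; omega
      simp only
      rw [if_neg h1', if_neg h2']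
      exact harcs e he (by omega) h2

lemma blkIv_matched {α : Type} (σ' : ℕ → Set α) (C' : Set (ℕ × ℕ)) {i m j : ℕ}
    (him : i < m) (hmj : m < j) (hC0 : ((i, m) : ℕ × ℕ) ∈ C')
    (harc : ∀ e ∈ C', e.1 < e.2)
    (hside : ∀ e ∈ C', i ≤ e.1 → e.2 < j → e ≠ (i, m) →
      (i < e.1 ∧ e.2 < m) ∨ (m < e.1 ∧ m < e.2)) :
    blkIv σ' C' i j =
      wrapLang (σ' i) (σ' m) (blkIv σ' C' (i + 1) m) * blkIv σ' C' (m + 1) j := by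
  ext w
  rw [Language.mem_mul]
  constructor
  · rintro ⟨B, rfl, hmem, harcs⟩
    rw [range'_split4 him hmj]
    simp only [List.map_append, List.flatten_append, List.map_cons, List.map_nil,
      List.flatten_cons, List.flatten_nil, List.append_nil]
    refine ⟨B i ++ ((List.range' (i+1) (m - (i+1))).map B).flatten ++ B m,
      ⟨B i, ((List.range' (i+1) (m - (i+1))).map B).flatten, B m, rfl,
        harcs (i, m) hC0 le_rfl (by omega), hmem i le_rfl (by omega),
        hmem m (by omega) (by omega), ⟨B, rfl, ?_, ?_⟩⟩,
      ((List.range' (m+1) (j - (m+1))).map B).flatten, ⟨B, rfl, ?_, ?_⟩, by simp⟩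
    · intro t ht1 ht2; exact hmem t (by omega) (by omega)
    · intro e he h1 h2; exact harcs e he (by omega) (by omega)
    · intro t ht1 ht2; exact hmem t (by omega) (by omega)
    · intro e he h1 h2; exact harcs e he (by omega) (by omega)
  · rintro ⟨z, ⟨a, x, b, rfl, hlen, ha, hb, ⟨B₁, hx, hmem₁, harc₁⟩⟩,
      y, ⟨B₂, hy, hmem₂, harc₂⟩, rfl⟩
    refine ⟨fun t => if t = i then a else if t = m then b else if t < m then B₁ t else B₂ t,
      ?_, ?_, ?_⟩
    · rw [range'_split4 him hmj]
      simp only [List.map_append, List.flatten_append, List.map_cons, List.map_nil,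
        List.flatten_cons, List.flatten_nil, List.append_nil]
      simp only [if_true, if_neg (show m ≠ i from by omega)]
      have hxeq : ((List.range' (i+1) (m - (i+1))).map
          (fun t => if t = i then a else if t = m then b else if t < m then B₁ t else B₂ t)).flatten
          = x := by
        rw [hx]
        congr 1
        apply List.map_congr_left
        intro t ht
        rw [List.mem_range'_1] at ht
        rw [if_neg (by omega), if_neg (by omega), if_pos (by omega)]
      have hyeq : ((List.range' (m+1) (j - (m+1))).map
          (fun t => if t = i then a else if t = m then b else if t < m then B₁ t else B₂ t)).flatten
          = y := by
        rw [hy]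
        congr 1
        apply List.map_congr_left
        intro t ht
        rw [List.mem_range'_1] at ht
        rw [if_neg (by omega), if_neg (by omega), if_neg (by omega)]
      rw [hxeq, hyeq]
    · intro t ht1 ht2 e he
      simp only at he
      by_cases h1 : t = i
      · rw [if_pos h1] at he; subst h1; exact ha e he
      · by_cases h2 : t = m
        · rw [if_neg h1, if_pos h2] at he; subst h2; exact hb e he
        · by_cases h3 : t < m
          · rw [if_neg h1, if_neg h2, if_pos h3] at he
            exact hmem₁ t (by omega) h3 e he
          · rw [if_neg h1, if_neg h2, if_neg h3] at he
            exact hmem₂ t (by omega) ht2 e he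
    · intro e he h1 h2
      by_cases heq : e = (i, m)
      · subst heq
        simp only [if_true, if_neg (show m ≠ i from by omega)]
        exact hlen
      · have hlt := harc e he
        rcases hside e he h1 h2 heq with ⟨hl1, hl2⟩ | ⟨hr1, hr2⟩
        · have c1 : e.1 ≠ i := by omega
          have c2 : e.1 ≠ m := by omega
          have c3 : e.1 < m := by omega
          have c4 : e.2 ≠ i := by omega
          have c5 : e.2 ≠ m := by omega
          have c6 : e.2 < m := by omega
          simp only [if_neg c1, if_neg c2, if_pos c3, if_neg c4, if_neg c5, if_pos c6]
          exact harc₁ e he (by omega) (by omega)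
        · have c1 : e.1 ≠ i := by omega
          have c2 : e.1 ≠ m := by omega
          have c3 : ¬ e.1 < m := by omega
          have c4 : e.2 ≠ i := by omega
          have c5 : e.2 ≠ m := by omega
          have c6 : ¬ e.2 < m := by omega
          simp only [if_neg c1, if_neg c2, if_neg c3, if_neg c4, if_neg c5, if_neg c6]
          exact harc₂ e he (by omega) (by omega)


def NCross (e₁ e₂ : ℕ × ℕ) : Prop :=
  (e₁.1 < e₂.1 ∧ e₂.1 < e₁.2 ∧ e₁.2 < e₂.2) ∨ (e₂.1 < e₁.1 ∧ e₁.1 < e₂.2 ∧ e₂.2 < e₁.2)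

lemma blkIv_cf {α : Type} (σ' : ℕ → Set α) (hfin : ∀ t, (σ' t).Finite) (C' : Set (ℕ × ℕ))
    (harc : ∀ e ∈ C', e.1 < e.2)
    (hwn : ∀ e₁ ∈ C', ∀ e₂ ∈ C', ¬ NCross e₁ e₂)
    (hm : ∀ e₁ ∈ C', ∀ e₂ ∈ C', e₁ ≠ e₂ →
      e₁.1 ≠ e₂.1 ∧ e₁.1 ≠ e₂.2 ∧ e₁.2 ≠ e₂.1 ∧ e₁.2 ≠ e₂.2) :
    ∀ n i j, j - i ≤ n →
      (∀ e ∈ C', (i ≤ e.1 ∧ e.1 < j) ∨ (i ≤ e.2 ∧ e.2 < j) → i ≤ e.1 ∧ e.2 < j) →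
      (blkIv σ' C' i j).IsContextFree := by
  intro n
  induction n with
  | zero =>
    intro i j hn _
    rw [blkIv_of_le σ' C' (by omega)]
    exact isContextFree_one
  | succ n ih =>
    intro i j hn hclosed
    by_cases hij : i < j
    · by_cases hex : ∃ m, (i, m) ∈ C'
      · obtain ⟨m, hm0⟩ := hex
        have him : i < m := harc _ hm0
        have hmj : m < j := (hclosed _ hm0 (Or.inl ⟨le_rfl, hij⟩)).2
        have hside : ∀ e ∈ C', i ≤ e.1 → e.2 < j → e ≠ (i, m) →
            (i < e.1 ∧ e.2 < m) ∨ (m < e.1 ∧ m < e.2) := by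
          intro e he h1 h2 hne
          obtain ⟨d1, d2, d3, d4⟩ := hm e he (i, m) hm0 hne
          have hlt := harc e he
          simp only at d1 d2 d3 d4
          by_cases hcase : e.1 < m
          · left
            refine ⟨by omega, ?_⟩
            by_contra hcon
            exact hwn (i, m) hm0 e he (Or.inl ⟨by omega, by omega, by omega⟩)
          · right; omega
        rw [blkIv_matched σ' C' him hmj hm0 harc hside]
        refine isContextFree_mul
          (isContextFree_wrap (hfin i) (hfin m) (ih (i+1) m (by omega) ?_))
          (ih (m+1) j (by omega) ?_)
        · intro e he hor
          have hne : e ≠ (i, m) := by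
            rintro rfl
            simp only at hor
            omega
          have hcl := hclosed e he (by
            rcases hor with ⟨h1, h2⟩ | ⟨h1, h2⟩
            exacts [Or.inl ⟨by omega, by omega⟩, Or.inr ⟨by omega, by omega⟩])
          rcases hside e he hcl.1 hcl.2 hne with ⟨h1, h2⟩ | ⟨h1, h2⟩
          · exact ⟨by omega, by omega⟩
          · exfalso
            have hlt := harc e he
            rcases hor with ⟨ha1, ha2⟩ | ⟨ha1, ha2⟩ <;> omega
        · intro e he hor
          have hne : e ≠ (i, m) := by
            rintro rfl
            simp only at hor
            omega
          have hcl := hclosed e he (by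
            rcases hor with ⟨h1, h2⟩ | ⟨h1, h2⟩
            exacts [Or.inl ⟨by omega, by omega⟩, Or.inr ⟨by omega, by omega⟩])
          rcases hside e he hcl.1 hcl.2 hne with ⟨h1, h2⟩ | ⟨h1, h2⟩
          · exfalso
            have hlt := harc e he
            rcases hor with ⟨ha1, ha2⟩ | ⟨ha1, ha2⟩ <;> omega
          · exact ⟨by omega, hcl.2⟩
      · have hno1 : ∀ e ∈ C', i ≤ e.1 → e.2 < j → e.1 ≠ i := by
          intro e he h1 h2 h
          apply hex
          exact ⟨e.2, by rw [← h]; simpa using he⟩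
        rw [blkIv_unmatched σ' C' hij harc hno1]
        refine isContextFree_mul (isContextFree_allWords (hfin i)) (ih (i+1) j (by omega) ?_)
        intro e he hor
        have h1 : i ≤ e.1 ∧ e.2 < j := hclosed e he (by
          rcases hor with ⟨h1, h2⟩ | ⟨h1, h2⟩
          exacts [Or.inl ⟨by omega, by omega⟩, Or.inr ⟨by omega, by omega⟩])
        have := hno1 e he h1.1 h1.2
        exact ⟨by omega, h1.2⟩
    · rw [blkIv_of_le σ' C' (by omega)]
      exact isContextFree_one

lemma ofFn_flatten_eq {α : Type} {k : ℕ} (B : Fin k → List α) :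
    List.ofFn B = (List.range' 0 (k - 0)).map
      (fun t => if h : t < k then B ⟨t, h⟩ else []) := by
  rw [Nat.sub_zero, ← List.range_eq_range']
  apply List.ext_getElem
  · simp
  · intro n h1 h2
    simp only [List.getElem_ofFn, List.getElem_map, List.getElem_range]
    rw [dif_pos (by simpa using h1)]

end CFX



/-- Two arcs cross: `i < i' < j < j'` or `i' < i < j' < j`. -/
def ArcsCross {k : ℕ} (e₁ e₂ : Fin k × Fin k) : Prop :=
  (e₁.1 < e₂.1 ∧ e₂.1 < e₁.2 ∧ e₁.2 < e₂.2) ∨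
  (e₂.1 < e₁.1 ∧ e₁.1 < e₂.2 ∧ e₂.2 < e₁.2)

/-- An arc set on `{1, …, k}`: every arc `(i, j)` satisfies `i < j`. -/
def IsArcSet {k : ℕ} (C : Set (Fin k × Fin k)) : Prop :=
  ∀ e ∈ C, e.1 < e.2

/-- An arc set is well-nested if no two of its arcs cross. -/
def WellNested {k : ℕ} (C : Set (Fin k × Fin k)) : Prop :=
  ∀ e₁ ∈ C, ∀ e₂ ∈ C, ¬ ArcsCross e₁ e₂

/-- An arc set is a matching if no two distinct arcs share an endpoint. -/
def IsMatching {k : ℕ} (C : Set (Fin k × Fin k)) : Prop :=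
  ∀ e₁ ∈ C, ∀ e₂ ∈ C, e₁ ≠ e₂ →
    ({e₁.1, e₁.2} : Set (Fin k)) ∩ {e₂.1, e₂.2} = ∅

/-- Joint well-nestedness of two arc sets: each is well-nested, no arc of one crosses an arc of
the other, and no two *distinct* arcs (one from each set) share an endpoint. -/
def JointlyWellNested {k : ℕ} (C₁ C₂ : Set (Fin k × Fin k)) : Prop :=
  WellNested C₁ ∧ WellNested C₂ ∧
  (∀ e₁ ∈ C₁, ∀ e₂ ∈ C₂, ¬ ArcsCross e₁ e₂) ∧
  (∀ e₁ ∈ C₁, ∀ e₂ ∈ C₂, e₁ ≠ e₂ →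
    ({e₁.1, e₁.2} : Set (Fin k)) ∩ {e₂.1, e₂.2} = ∅)

/-- The block-counting language over the sub-alphabets `σ 0, …, σ (k-1)` with arc set `C`:
all words that decompose as `B₁B₂⋯B_k` with each block `B_i` over `σ i` and with
`|B_i| = |B_j|` for every arc `(i, j) ∈ C`. -/
def blockLang {α : Type} {k : ℕ} (σ : Fin k → Set α) (C : Set (Fin k × Fin k)) : Language α :=
  { w | ∃ B : Fin k → List α,
      w = (List.ofFn B).flatten ∧
      (∀ i : Fin k, ∀ x ∈ B i, x ∈ σ i) ∧
      (∀ e ∈ C, (B e.1).length = (B e.2).length) }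

/-- A block-counting language with a well-nested matching arc set is context-free. -/
theorem blockLang_contextFree {α : Type} {k : ℕ}
    (σ : Fin k → Set α)
    (hdisj : ∀ i j : Fin k, i ≠ j → Disjoint (σ i) (σ j))
    (hfin : ∀ i : Fin k, (σ i).Finite) (hne : ∀ i : Fin k, (σ i).Nonempty)
    (C : Set (Fin k × Fin k))
    (hC : IsArcSet C) (hwn : WellNested C) (hm : IsMatching C) :
    (blockLang σ C).IsContextFree := by
  classical
  let σ'' : ℕ → Set α := fun t => if h : t < k then σ ⟨t, h⟩ else ∅
  let C'' : Set (ℕ × ℕ) := (fun e : Fin k × Fin k => ((e.1 : ℕ), (e.2 : ℕ))) '' C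
  have hfin'' : ∀ t, (σ'' t).Finite := by
    intro t
    by_cases h : t < k
    · simpa [σ'', dif_pos h] using hfin ⟨t, h⟩
    · simp [σ'', dif_neg h]
  have harc'' : ∀ e ∈ C'', e.1 < e.2 := by
    rintro e ⟨f, hf, rfl⟩
    exact hC f hf
  have hwn'' : ∀ e₁ ∈ C'', ∀ e₂ ∈ C'', ¬ CFX.NCross e₁ e₂ := by
    rintro _ ⟨f₁, hf₁, rfl⟩ _ ⟨f₂, hf₂, rfl⟩ hcr
    refine hwn f₁ hf₁ f₂ hf₂ ?_
    rcases hcr with ⟨h1, h2, h3⟩ | ⟨h1, h2, h3⟩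
    · exact Or.inl ⟨h1, h2, h3⟩
    · exact Or.inr ⟨h1, h2, h3⟩
  have hm'' : ∀ e₁ ∈ C'', ∀ e₂ ∈ C'', e₁ ≠ e₂ →
      e₁.1 ≠ e₂.1 ∧ e₁.1 ≠ e₂.2 ∧ e₁.2 ≠ e₂.1 ∧ e₁.2 ≠ e₂.2 := by
    rintro _ ⟨f₁, hf₁, rfl⟩ _ ⟨f₂, hf₂, rfl⟩ hne
    have hfne : f₁ ≠ f₂ := by rintro rfl; exact hne rfl
    have h := hm f₁ hf₁ f₂ hf₂ hfne
    rw [Set.eq_empty_iff_forall_notMem] at h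
    have key : ∀ a : Fin k, a = f₁.1 ∨ a = f₁.2 → a = f₂.1 ∨ a = f₂.2 → False := by
      intro a h1 h2
      refine h a ⟨?_, ?_⟩
      · rcases h1 with rfl | rfl <;> simp
      · rcases h2 with rfl | rfl <;> simp
    refine ⟨?_, ?_, ?_, ?_⟩ <;> intro hv
    · exact key f₁.1 (Or.inl rfl) (Or.inl (Fin.val_injective hv))
    · exact key f₁.1 (Or.inl rfl) (Or.inr (Fin.val_injective hv))
    · exact key f₁.2 (Or.inr rfl) (Or.inl (Fin.val_injective hv))
    · exact key f₁.2 (Or.inr rfl) (Or.inr (Fin.val_injective hv))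
  have hclosed : ∀ e ∈ C'', (0 ≤ e.1 ∧ e.1 < k) ∨ (0 ≤ e.2 ∧ e.2 < k) → 0 ≤ e.1 ∧ e.2 < k := by
    rintro _ ⟨f, hf, rfl⟩ _
    exact ⟨Nat.zero_le _, f.2.isLt⟩
  have hEq : blockLang σ C = CFX.blkIv σ'' C'' 0 k := by
    ext w
    constructor
    · rintro ⟨B, rfl, hmem, harcs⟩
      refine ⟨fun t => if h : t < k then B ⟨t, h⟩ else [], ?_, ?_, ?_⟩
      · rw [CFX.ofFn_flatten_eq B]
      · intro t ht1 ht2 x hx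
        simp only at hx
        rw [dif_pos ht2] at hx
        have : σ'' t = σ ⟨t, ht2⟩ := dif_pos ht2
        rw [this]
        exact hmem ⟨t, ht2⟩ x hx
      · rintro _ ⟨f, hf, rfl⟩ h1 h2
        simp only [dif_pos f.1.isLt, dif_pos f.2.isLt, Fin.eta]
        exact harcs f hf
    · rintro ⟨B', hw, hmem, harcs⟩
      refine ⟨fun i => B' i, ?_, ?_, ?_⟩
      · rw [hw, CFX.ofFn_flatten_eq (fun i : Fin k => B' i)]
        congr 1
        apply List.map_congr_left
        intro t ht
        rw [List.mem_range'_1] at ht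
        rw [dif_pos (by omega : t < k)]
      · intro i x hx
        have h1 := hmem i (Nat.zero_le _) i.isLt x hx
        have : σ'' (i : ℕ) = σ i := by
          simp only [σ'', dif_pos i.isLt, Fin.eta]
        rwa [this] at h1
      · intro e he
        exact harcs ((e.1 : ℕ), (e.2 : ℕ)) ⟨e, he, rfl⟩ (Nat.zero_le _) e.2.isLt
  rw [hEq]
  exact CFX.blkIv_cf σ'' hfin'' C'' harc'' hwn'' hm'' k 0 k (by omega) hclosed
end

section
/- Over the four-letter alphabet {a, b, c, d}, let L₁ = { w : w = aᵐ¹ ++ bᵐ² ++ cᵐ³ ++ dᵐ⁴ for some m₁, m₂, m₃, m₄ with m₁ = m₃ }. For every n ≥ 1, the language L₁ does NOT have a pump-sensitive linkage (P₁, P₃) on the factorization aⁿ ++ bⁿ ++ cⁿ ++ dⁿ = P₁P₂P₃P₄ with P₁ = aⁿ, P₂ = bⁿ, P₃ = cⁿ, P₄ = dⁿ: there exists a factorization aⁿbⁿcⁿdⁿ = u v x y z with |v| + |y| ≥ 1 such that the position range occupied by v x y intersects the position range of P₁ and is disjoint from the position range of P₃, and yet u v v x y y z ∈ L₁. -/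
/-- The four-letter alphabet `{a, b, c, d}`. -/
inductive Sigma4 : Type
  | a | b | c | d
  deriving DecidableEq, Repr

open Sigma4

/-- `L₁ = { a^{m₁} b^{m₂} c^{m₃} d^{m₄} : m₁ = m₃ }`. -/
def L₁ : Language Sigma4 :=
  { w | ∃ m₁ m₂ m₃ m₄ : ℕ, m₁ = m₃ ∧
      w = List.replicate m₁ a ++ List.replicate m₂ b ++
        List.replicate m₃ c ++ List.replicate m₄ d }

/-- `L₂ = { a^{m₁} b^{m₂} c^{m₃} d^{m₄} : m₂ = m₄ }`. -/
def L₂ : Language Sigma4 :=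
  { w | ∃ m₁ m₂ m₃ m₄ : ℕ, m₂ = m₄ ∧
      w = List.replicate m₁ a ++ List.replicate m₂ b ++
        List.replicate m₃ c ++ List.replicate m₄ d }

/-- Start position (0-indexed) of segment `i` in the concatenation of the segments `Ps`. -/
def segStart {α : Type} (Ps : List (List α)) (i : ℕ) : ℕ :=
  ((Ps.take i).map List.length).sum

/-- The set of (0-indexed) positions occupied by segment `i` of the factorization `Ps`. -/
def segRange {α : Type} (Ps : List (List α)) (i : ℕ) : Set ℕ :=
  Set.Ico (segStart Ps i) (segStart Ps i + (Ps.getD i []).length)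

/-- The set of positions occupied by the substring `v ++ x ++ y` inside `u ++ v ++ x ++ y ++ z`. -/
def vxyRange {α : Type} (u v x y : List α) : Set ℕ :=
  Set.Ico u.length (u.length + (v.length + x.length + y.length))

/-- `L` has a pump-sensitive linkage `(P_i, P_j)` on the factorization `Ps = [P₁, …, P_k]`. -/
def HasPumpSensitiveLinkage {α : Type} (L : Language α) (Ps : List (List α)) (i j : ℕ) : Prop :=
  ∀ u v x y z : List α,
    Ps.flatten = u ++ v ++ x ++ y ++ z →
    1 ≤ v.length + y.length →
    (((vxyRange u v x y ∩ segRange Ps i).Nonempty ∧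
        Disjoint (vxyRange u v x y) (segRange Ps j)) ∨
     ((vxyRange u v x y ∩ segRange Ps j).Nonempty ∧
        Disjoint (vxyRange u v x y) (segRange Ps i))) →
    u ++ v ++ v ++ x ++ y ++ y ++ z ∉ L

/-- `L₁` alone does *not* have a pump-sensitive linkage `(P₁, P₃)` on the factorization
`aⁿbⁿcⁿdⁿ = P₁P₂P₃P₄` with `P₁ = aⁿ`, `P₂ = bⁿ`, `P₃ = cⁿ`, `P₄ = dⁿ`: some factorization
`u v x y z` with `|v| + |y| ≥ 1` has its `vxy`-range intersecting the range of `P₁` and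
disjoint from that of `P₃`, yet the pumped word stays in `L₁`. -/
theorem L₁_no_linkage (n : ℕ) (hn : 1 ≤ n) :
    ∃ u v x y z : List Sigma4,
      ([List.replicate n a, List.replicate n b, List.replicate n c,
          List.replicate n d] : List (List Sigma4)).flatten = u ++ v ++ x ++ y ++ z ∧
      1 ≤ v.length + y.length ∧
      ((vxyRange u v x y ∩ segRange
          [List.replicate n a, List.replicate n b, List.replicate n c,
            List.replicate n d] 0).Nonempty ∧
        Disjoint (vxyRange u v x y) (segRange
          [List.replicate n a, List.replicate n b, List.replicate n c,
            List.replicate n d] 2)) ∧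
      u ++ v ++ v ++ x ++ y ++ y ++ z ∈ L₁ := by
  obtain ⟨m, rfl⟩ : ∃ m, n = m + 1 := ⟨n - 1, (Nat.succ_pred_eq_of_pos hn).symm⟩
  refine ⟨List.replicate m a, [], [a] ++ List.replicate m b, [b],
    List.replicate (m+1) c ++ List.replicate (m+1) d, ?_, by simp, ⟨⟨m, ?_, ?_⟩, ?_⟩, ?_⟩
  · simp [List.replicate_succ' (n := m), List.replicate_succ]
  · simp [vxyRange]
  · simp [segRange, segStart]
  · simp only [vxyRange, segRange, segStart, List.take, List.map, List.length_replicate,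
      List.length_append, List.length_cons, List.length_nil, List.getD]
    rw [Set.disjoint_left]
    intro p hp hq
    simp [Set.mem_Ico] at hp hq
    omega
  · refine ⟨m+1, m+2, m+1, m+1, rfl, ?_⟩
    simp [List.replicate_succ' (n := m+1), List.replicate_succ' (n := m), List.replicate_succ]
end

section
/- Over the alphabet {0, 1}, the interleaved palindrome language L = { w : |w| = 2m for some m ≥ 0, the string formed by the symbols of w at odd positions (w₁ w₃ ⋯ w₂ₘ₋₁) is a palindrome, and the string formed by the symbols of w at even positions (w₂ w₄ ⋯ w₂ₘ) is a palindrome } is context-free. -/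
/-- The subsequence of a word consisting of the symbols whose 0-indexed position is congruent
to `r` modulo 2. Taking `r = 0` gives the symbols at odd positions (1-indexed)
`w₁ w₃ w₅ ⋯`, and `r = 1` gives the symbols at even positions `w₂ w₄ w₆ ⋯`. -/
def alternate {α : Type} (w : List α) (r : ℕ) : List α :=
  (w.zipIdx.filter (fun p => p.2 % 2 = r)).map Prod.fst

/-- The interleaved palindrome language over `{0, 1}`: words of even length whose
odd-position subsequence and even-position subsequence are both palindromes. -/
def interleavedPal : Language Bool :=
  { w | ∃ m : ℕ, w.length = 2 * m ∧
      (alternate w 0).reverse = alternate w 0 ∧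
      (alternate w 1).reverse = alternate w 1 }

namespace IPal

/-- Helper: the `alternate` of an `enumFrom`. -/
def A (r : ℕ) (w : List Bool) (n : ℕ) : List Bool :=
  ((List.zipIdx w n).filter (fun p => p.2 % 2 = r)).map Prod.fst

lemma alternate_eq_A (w : List Bool) (r : ℕ) : alternate w r = A r w 0 := rfl

lemma A_shift2 (r : ℕ) (v : List Bool) : ∀ n, A r v (n + 2) = A r v n := by
  induction v with
  | nil => intro n; rfl
  | cons x v ih =>
    intro n
    simp only [A, List.zipIdx, List.filter, List.map]
    have h2 : (n + 2) % 2 = n % 2 := Nat.add_mod_right n 2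
    have := ih (n + 1)
    simp only [A] at this
    rw [h2]
    cases hd : decide (n % 2 = r) <;>
      simp_all [List.filter_cons, show n + 1 + 2 = n + 2 + 1 from rfl]

lemma A_of_even (r : ℕ) (v : List Bool) (n : ℕ) (hn : Even n) : A r v n = A r v 0 := by
  obtain ⟨k, rfl⟩ := hn
  induction k with
  | zero => rfl
  | succ k ih =>
    have : k + 1 + (k + 1) = (k + k) + 2 := by ring
    rw [this, A_shift2, ih]

lemma A_append (r : ℕ) (u v : List Bool) (n : ℕ) :
    A r (u ++ v) n = A r u n ++ A r v (n + u.length) := by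
  simp [A, List.zipIdx_append]

lemma alternate_append_even (r : ℕ) (u v : List Bool) (hu : Even u.length) :
    alternate (u ++ v) r = alternate u r ++ alternate v r := by
  rw [alternate_eq_A, alternate_eq_A, alternate_eq_A, A_append, Nat.zero_add,
    A_of_even _ _ _ hu]

lemma alternate_cons_cons (a b : Bool) (u : List Bool) (r : ℕ) (hr : r < 2) :
    alternate (a :: b :: u) r = (if r = 0 then a else b) :: alternate u r := by
  rw [alternate_eq_A, show a :: b :: u = [a, b] ++ u from rfl, A_append,
    show (0 : ℕ) + [a, b].length = 2 from rfl, A_of_even r u 2 ⟨1, rfl⟩]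
  have : A r [a, b] 0 = [if r = 0 then a else b] := by
    interval_cases r <;> rfl
  rw [this]; rfl

lemma alternate_zero_cons_cons (a b : Bool) (u : List Bool) :
    alternate (a :: b :: u) 0 = a :: alternate u 0 := by
  simpa using alternate_cons_cons a b u 0 (by norm_num)

lemma alternate_one_cons_cons (a b : Bool) (u : List Bool) :
    alternate (a :: b :: u) 1 = b :: alternate u 1 := by
  simpa using alternate_cons_cons a b u 1 (by norm_num)

lemma alternate_pair (a b : Bool) (r : ℕ) (hr : r < 2) :
    alternate [a, b] r = [if r = 0 then a else b] := by
  simpa [alternate] using alternate_cons_cons a b [] r hr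

/-- Flatten a list of pairs into a word. -/
def flat : List (Bool × Bool) → List Bool
  | [] => []
  | (a, b) :: p => a :: b :: flat p

lemma flat_append (p q : List (Bool × Bool)) : flat (p ++ q) = flat p ++ flat q := by
  induction p with
  | nil => rfl
  | cons x p ih => obtain ⟨a, b⟩ := x; simp [flat, ih]

lemma flat_length (p : List (Bool × Bool)) : (flat p).length = 2 * p.length := by
  induction p with
  | nil => rfl
  | cons x p ih => obtain ⟨a, b⟩ := x; simp [flat, ih]; ring

lemma alternate_flat (p : List (Bool × Bool)) (r : ℕ) (hr : r < 2) :
    alternate (flat p) r = p.map (if r = 0 then Prod.fst else Prod.snd) := by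
  induction p with
  | nil => interval_cases r <;> rfl
  | cons x p ih =>
    obtain ⟨a, b⟩ := x
    rw [show flat ((a, b) :: p) = a :: b :: flat p from rfl, alternate_cons_cons _ _ _ _ hr, ih]
    interval_cases r <;> simp

/-- The blockwise description of the language. -/
def Mid (m : List Bool) : Prop := m = [] ∨ ∃ a b : Bool, m = [a, b]

def BlockPal : Language Bool :=
  { w | ∃ p : List (Bool × Bool), ∃ m : List Bool, Mid m ∧ w = flat p ++ m ++ flat p.reverse }

lemma alternate_mid (m : List Bool) (hm : Mid m) (r : ℕ) (hr : r < 2) :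
    ∃ c : List Bool, c.length ≤ 1 ∧ alternate m r = c ∧ c.reverse = c ∧ Even m.length := by
  rcases hm with rfl | ⟨a, b, rfl⟩
  · exact ⟨[], by simp, rfl, rfl, by simp⟩
  · exact ⟨[if r = 0 then a else b], by simp, alternate_pair a b r hr, rfl, ⟨1, rfl⟩⟩

lemma blockPal_subset : ∀ w ∈ BlockPal, w ∈ interleavedPal := by
  rintro w ⟨p, m, hm, rfl⟩
  have key : ∀ r : ℕ, r < 2 →
      (alternate (flat p ++ m ++ flat p.reverse) r).reverse
        = alternate (flat p ++ m ++ flat p.reverse) r := by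
    intro r hr
    obtain ⟨c, hc1, hc2, hc3, _⟩ := alternate_mid m hm r hr
    have hev : Even (flat p).length := ⟨p.length, by rw [flat_length]; ring⟩
    have hev2 : Even m.length := (alternate_mid m hm r hr).choose_spec.2.2.2
    rw [List.append_assoc, alternate_append_even _ _ _ hev,
      alternate_append_even _ _ _ hev2, hc2,
      alternate_flat _ _ hr, alternate_flat _ _ hr]
    simp only [List.map_reverse, List.reverse_append, List.reverse_reverse, hc3]
    simp [List.append_assoc]
  obtain ⟨c, hc1, hc2, hc3, hev⟩ := alternate_mid m hm 0 (by norm_num)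
  obtain ⟨k, hk⟩ := hev
  refine ⟨p.length * 2 + k, ?_, key 0 (by norm_num), key 1 (by norm_num)⟩
  simp [flat_length, hk]
  ring

lemma exists_last_two (u : List Bool) (hu : 2 ≤ u.length) :
    ∃ u' c d, u = u' ++ [c, d] := by
  rcases List.eq_nil_or_concat u with rfl | ⟨v, d, rfl⟩
  · simp at hu
  rcases List.eq_nil_or_concat v with rfl | ⟨v', c, rfl⟩
  · simp at hu
  exact ⟨v', c, d, by simp⟩

lemma interleaved_subset : ∀ w ∈ interleavedPal, w ∈ BlockPal := by
  suffices h : ∀ n (w : List Bool), w.length ≤ n → w ∈ interleavedPal → w ∈ BlockPal from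
    fun w hw => h w.length w le_rfl hw
  intro n
  induction n with
  | zero =>
    intro w hw _
    rw [List.length_eq_zero_iff.mp (Nat.le_zero.mp hw)]
    exact ⟨[], [], Or.inl rfl, rfl⟩
  | succ n ih =>
    intro w hw hmem
    obtain ⟨m, hlen, h0, h1⟩ := hmem
    match w, hlen, h0, h1, hw with
    | [], _, _, _, _ => exact ⟨[], [], Or.inl rfl, rfl⟩
    | [a], hlen, _, _, _ => simp at hlen; omega
    | a :: b :: u, hlen, h0, h1, hw =>
      rcases u with _ | ⟨x, u₀⟩
      · exact ⟨[], [a, b], Or.inr ⟨a, b, rfl⟩, rfl⟩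
      obtain ⟨u', c, d, heq⟩ := exists_last_two (x :: u₀) (by
        simp only [List.length_cons] at hlen ⊢; omega)
      rw [heq] at hlen h0 h1 hw ⊢
      have hu'len : u'.length + 4 = 2 * m := by
        simp at hlen; omega
      have hu'ev : Even u'.length := by rw [Nat.even_iff]; omega
      have e0 : alternate (a :: b :: (u' ++ [c, d])) 0 = a :: (alternate u' 0 ++ [c]) := by
        rw [alternate_zero_cons_cons, alternate_append_even 0 u' [c, d] hu'ev,
          alternate_pair c d 0 (by norm_num)]
        rfl
      have e1 : alternate (a :: b :: (u' ++ [c, d])) 1 = b :: (alternate u' 1 ++ [d]) := by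
        rw [alternate_one_cons_cons, alternate_append_even 1 u' [c, d] hu'ev,
          alternate_pair c d 1 (by norm_num)]
        rfl
      rw [e0] at h0
      rw [e1] at h1
      simp only [List.reverse_cons, List.reverse_append, List.reverse_cons, List.reverse_nil,
        List.nil_append, List.cons_append, List.append_assoc] at h0 h1
      -- h0 : c :: ((alternate u' 0).reverse ++ [a]) = a :: (alternate u' 0 ++ [c])
      obtain ⟨hca, h0'⟩ := List.cons.injEq .. ▸ h0
      obtain ⟨hdb, h1'⟩ := List.cons.injEq .. ▸ h1
      subst hca hdb
      have p0 : (alternate u' 0).reverse = alternate u' 0 :=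
        List.append_cancel_right h0'
      have p1 : (alternate u' 1).reverse = alternate u' 1 :=
        List.append_cancel_right h1'
      have hwlen : (c :: d :: (u' ++ [c, d])).length = u'.length + 4 := by simp
      obtain ⟨p, mm, hmid, rfl⟩ := ih u' (by rw [hwlen] at hw; omega)
        ⟨m - 2, by omega, p0, p1⟩
      refine ⟨(c, d) :: p, mm, hmid, ?_⟩
      simp [flat, flat_append, List.append_assoc]


/-! ### The grammar -/


def r0 : ContextFreeRule Bool Unit := ⟨(), []⟩

def rmid (a b : Bool) : ContextFreeRule Bool Unit :=
  ⟨(), [.terminal a, .terminal b]⟩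

def rwrap (a b : Bool) : ContextFreeRule Bool Unit :=
  ⟨(), [.terminal a, .terminal b, .nonterminal (), .terminal a, .terminal b]⟩

@[reducible] def G : ContextFreeGrammar Bool :=
  ⟨Unit, (),
    {r0, rmid false false, rmid false true, rmid true false, rmid true true,
     rwrap false false, rwrap false true, rwrap true false, rwrap true true}⟩

abbrev TT (w : List Bool) : List (Symbol Bool Unit) := w.map Symbol.terminal

lemma derive_pairs (p : List (Bool × Bool)) :
    G.Derives [Symbol.nonterminal ()] (TT (flat p) ++ [Symbol.nonterminal ()] ++ TT (flat p.reverse)) := by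
  induction p with
  | nil => simpa [flat, TT] using ContextFreeGrammar.Derives.refl _
  | cons x p ih =>
    obtain ⟨a, b⟩ := x
    have hstep : G.Produces [Symbol.nonterminal ()] (rwrap a b).output :=
      ⟨rwrap a b, by cases a <;> cases b <;> simp [G], ContextFreeRule.Rewrites.input_output⟩
    have key : TT (flat ((a, b) :: p)) ++ [Symbol.nonterminal ()] ++ TT (flat ((a, b) :: p).reverse)
        = [Symbol.terminal a, Symbol.terminal b]
          ++ (TT (flat p) ++ [Symbol.nonterminal ()] ++ TT (flat p.reverse))
          ++ [Symbol.terminal a, Symbol.terminal b] := by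
      simp [TT, flat, flat_append, List.append_assoc]
    rw [key]
    exact hstep.trans_derives
      ((ih.append_left [Symbol.terminal a, Symbol.terminal b]).append_right
        [Symbol.terminal a, Symbol.terminal b])

lemma mid_derives (m : List Bool) (hm : Mid m) :
    G.Derives [Symbol.nonterminal ()] (TT m) := by
  rcases hm with rfl | ⟨a, b, rfl⟩
  · exact (ContextFreeGrammar.Produces.single
      ⟨r0, by simp [G], ContextFreeRule.Rewrites.input_output⟩)
  · exact (ContextFreeGrammar.Produces.single
      ⟨rmid a b, by cases a <;> cases b <;> simp [G], ContextFreeRule.Rewrites.input_output⟩)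

lemma blockPal_subset_lang : ∀ w ∈ BlockPal, w ∈ G.language := by
  rintro w ⟨p, m, hm, rfl⟩
  rw [ContextFreeGrammar.mem_language_iff]
  have h1 := derive_pairs p
  rw [List.append_assoc] at h1
  have h2 := ((mid_derives m hm).append_right (TT (flat p.reverse))).append_left (TT (flat p))
  have := h1.trans h2
  simpa [TT, List.append_assoc] using this

/-- The invariant satisfied by all sentential forms derivable in `G`. -/
def Inv (s : List (Symbol Bool Unit)) : Prop :=
  (∃ w ∈ BlockPal, s = TT w) ∨
  (∃ p : List (Bool × Bool), s = TT (flat p) ++ [Symbol.nonterminal ()] ++ TT (flat p.reverse))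

lemma not_mem_TT (w : List Bool) : Symbol.nonterminal () ∉ TT w := by
  simp [TT]

lemma eq_append_of_not_mem {α : Type} (a : α) :
    ∀ (x p y q : List α), a ∉ x → a ∉ y → x ++ a :: y = p ++ a :: q → x = p ∧ y = q := by
  intro x
  induction x with
  | nil =>
    intro p y q _ hy h
    cases p with
    | nil => simpa using h
    | cons b p =>
      simp only [List.nil_append, List.cons_append, List.cons.injEq] at h
      exact absurd (h.2 ▸ List.mem_append_right p List.mem_cons_self) hy
  | cons b x ih =>
    intro p y q hx hy h
    cases p with
    | nil =>
      simp only [List.cons_append, List.nil_append, List.cons.injEq] at h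
      exact absurd (List.mem_cons.mpr (Or.inl h.1.symm)) hx
    | cons b' p =>
      simp only [List.cons_append, List.cons.injEq] at h
      obtain ⟨rfl, h⟩ := h
      obtain ⟨rfl, rfl⟩ := ih p y q (fun hm => hx (List.mem_cons_of_mem _ hm)) hy h
      exact ⟨rfl, rfl⟩

lemma inv_step {s t : List (Symbol Bool Unit)} (h : G.Produces s t) (hs : Inv s) : Inv t := by
  obtain ⟨r, hr, hrw⟩ := h
  obtain ⟨x, y, hst, rfl⟩ := hrw.exists_parts
  have hinput : r.input = () := rfl
  rcases hs with ⟨w, hw, rfl⟩ | ⟨p, hp⟩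
  · exfalso
    exact not_mem_TT w (hst ▸ (by simp : Symbol.nonterminal r.input ∈ x ++ [Symbol.nonterminal r.input] ++ y))
  · rw [hp] at hst
    rw [hinput] at hst
    have hsplit := eq_append_of_not_mem (Symbol.nonterminal ()) (TT (flat p)) x
      (TT (flat p.reverse)) y (not_mem_TT _) (not_mem_TT _)
      (by simpa [List.append_assoc] using hst)
    obtain ⟨rfl, rfl⟩ := hsplit
    simp only [G, Finset.mem_insert, Finset.mem_singleton] at hr
    rcases hr with rfl | rfl | rfl | rfl | rfl | rfl | rfl | rfl | rfl
    · exact Or.inl ⟨flat p ++ [] ++ flat p.reverse, ⟨p, [], Or.inl rfl, rfl⟩, by simp [r0, TT]⟩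
    · exact Or.inl ⟨flat p ++ [false, false] ++ flat p.reverse,
        ⟨p, _, Or.inr ⟨_, _, rfl⟩, rfl⟩, by simp [rmid, TT]⟩
    · exact Or.inl ⟨flat p ++ [false, true] ++ flat p.reverse,
        ⟨p, _, Or.inr ⟨_, _, rfl⟩, rfl⟩, by simp [rmid, TT]⟩
    · exact Or.inl ⟨flat p ++ [true, false] ++ flat p.reverse,
        ⟨p, _, Or.inr ⟨_, _, rfl⟩, rfl⟩, by simp [rmid, TT]⟩
    · exact Or.inl ⟨flat p ++ [true, true] ++ flat p.reverse,
        ⟨p, _, Or.inr ⟨_, _, rfl⟩, rfl⟩, by simp [rmid, TT]⟩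
    · exact Or.inr ⟨p ++ [(false, false)], by
        simp [rwrap, TT, flat_append, flat, List.append_assoc]⟩
    · exact Or.inr ⟨p ++ [(false, true)], by
        simp [rwrap, TT, flat_append, flat, List.append_assoc]⟩
    · exact Or.inr ⟨p ++ [(true, false)], by
        simp [rwrap, TT, flat_append, flat, List.append_assoc]⟩
    · exact Or.inr ⟨p ++ [(true, true)], by
        simp [rwrap, TT, flat_append, flat, List.append_assoc]⟩

lemma lang_subset_blockPal : ∀ w ∈ G.language, w ∈ BlockPal := by
  intro w hw
  rw [ContextFreeGrammar.mem_language_iff] at hw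
  have hinv : ∀ s, G.Derives [Symbol.nonterminal ()] s → Inv s := by
    intro s h
    induction h with
    | refl => exact Or.inr ⟨[], by simp [flat, TT]⟩
    | tail _ hp ih => exact inv_step hp ih
  rcases hinv _ hw with ⟨w', hw', heq⟩ | ⟨p, hp⟩
  · have : w = w' := by
      have hinj : Function.Injective (Symbol.terminal : Bool → Symbol Bool Unit) :=
        fun a b hab => by injection hab
      exact List.map_injective_iff.mpr hinj heq
    exact this ▸ hw'
  · exfalso
    have : Symbol.nonterminal () ∈ List.map Symbol.terminal w := by rw [hp]; simp
    exact not_mem_TT w this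

end IPal


/-- The interleaved palindrome language is context-free. -/
theorem interleavedPal_isContextFree : interleavedPal.IsContextFree := by
  refine ⟨IPal.G, ?_⟩
  ext w
  constructor
  · exact fun hw => IPal.blockPal_subset w (IPal.lang_subset_blockPal w hw)
  · exact fun hw => IPal.blockPal_subset_lang w (IPal.interleaved_subset w hw)
end
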